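/- Let (x̄,λ̄) be a KKT point of the unperturbed problem (a,b)=(0,0). Suppose Robinson's constraint qualification holds at x̄, i.e., 0 ∈ int{g(x̄) + g'(x̄)X − K}, and that M(x̄,0,0) = {λ̄}. If X_KKT has the pseudo-isolated calmness at the origin for x̄ (relative to λ̄), then X_KKT is isolated calm at the origin (0,0) for x̄. -/

import Mathlib

open Set Filter Topology Metric Pointwise
open scoped RealInnerProductSpace Classical

noncomputable section

/-- The normal cone of convex analysis: `N_K(z) = {l | ⟪l, y - z⟫ ≤ 0 ∀ y ∈ K}`,
empty when `z ∉ K`. -/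
def nCone {E : Type*} [NormedAddCommGroup E] [InnerProductSpace ℝ E]
    (K : Set E) (z : E) : Set E :=
  {l | z ∈ K ∧ ∀ y ∈ K, ⟪l, y - z⟫ ≤ 0}

/-- The metric projection onto `K`: under the standing assumptions (`K` nonempty,
closed and convex in a finite-dimensional space) the distance minimizer exists and
is unique, so this choice-based definition is exactly the metric projection `Π_K`. -/

def projK {E : Type*} [NormedAddCommGroup E] [InnerProductSpace ℝ E]
    (K : Set E) (z : E) : E :=
  if h : ∃ p, p ∈ K ∧ ∀ y ∈ K, ‖z - p‖ ≤ ‖z - y‖ then h.choose else 0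

/-- A set `D` is a pointed closed convex cone. -/
def PointedClosedConvexCone {E : Type*} [NormedAddCommGroup E] [NormedSpace ℝ E]
    (D : Set E) : Prop :=
  IsClosed D ∧ Convex ℝ D ∧ (∀ t : ℝ, 0 ≤ t → ∀ z ∈ D, t • z ∈ D) ∧ D ∩ (-D) ⊆ {0}

/-- `K` is `C²`-cone reducible at `y`: near `y`, `K` is the inverse image of a pointed
closed convex cone `D` under a twice continuously differentiable map `Ξ` with `Ξ y = 0`
and `Ξ'(y)` surjective.  (Since the target of the reduction is a finite-dimensional
space of dimension at most `dim Y`, it can be taken to be a Euclidean space.) -/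
def C2ConeReducibleAt {Y : Type*} [NormedAddCommGroup Y] [InnerProductSpace ℝ Y]
    (K : Set Y) (y : Y) : Prop :=
  ∃ (m : ℕ) (U : Set Y) (D : Set (EuclideanSpace ℝ (Fin m)))
    (Ξ : Y → EuclideanSpace ℝ (Fin m)),
      IsOpen U ∧ y ∈ U ∧ PointedClosedConvexCone D ∧ ContDiffOn ℝ 2 Ξ U ∧
      Ξ y = 0 ∧ Function.Surjective (fderiv ℝ Ξ y) ∧ K ∩ U = {y' ∈ U | Ξ y' ∈ D}

/-- `K` is `C²`-cone reducible (at every point of `K`). -/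
def C2ConeReducible {Y : Type*} [NormedAddCommGroup Y] [InnerProductSpace ℝ Y]
    (K : Set Y) : Prop :=
  ∀ y ∈ K, C2ConeReducibleAt K y

/-- Calmness of a set-valued map `F` at `z0` for `w0 ∈ F z0`. -/
def Calm {Z W : Type*} [NormedAddCommGroup Z] [NormedAddCommGroup W]
    (F : Z → Set W) (z0 : Z) (w0 : W) : Prop :=
  ∃ κ ε δ : ℝ, 0 < κ ∧ 0 < ε ∧ 0 < δ ∧
    ∀ z : Z, ‖z - z0‖ ≤ ε → ∀ w ∈ F z, ‖w - w0‖ ≤ δ →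
      ∃ w' ∈ F z0, ‖w - w'‖ ≤ κ * ‖z - z0‖

/-- Isolated calmness of a set-valued map `F` at `z0` for `w0 ∈ F z0`. -/
def IsolatedCalm {Z W : Type*} [NormedAddCommGroup Z] [NormedAddCommGroup W]
    (F : Z → Set W) (z0 : Z) (w0 : W) : Prop :=
  ∃ κ ε δ : ℝ, 0 < κ ∧ 0 < ε ∧ 0 < δ ∧
    ∀ z : Z, ‖z - z0‖ ≤ ε → ∀ w ∈ F z, ‖w - w0‖ ≤ δ →
      ‖w - w0‖ ≤ κ * ‖z - z0‖

/-- Metric subregularity of `F` at `z0` for `w0 ∈ F z0`: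
`dist(z, F⁻¹(w0)) ≤ κ · dist(w0, F z ∩ B_δ(w0))` for `z` near `z0`; since the
right-hand side is an infimum over `F z ∩ B_δ(w0)` (`= +∞` when empty), this is
equivalently stated pointwise. -/
def MetricallySubregular {Z W : Type*} [NormedAddCommGroup Z] [NormedAddCommGroup W]
    (F : Z → Set W) (z0 : Z) (w0 : W) : Prop :=
  ∃ κ ε δ : ℝ, 0 < κ ∧ 0 < ε ∧ 0 < δ ∧
    ∀ z : Z, ‖z - z0‖ ≤ ε → ∀ w ∈ F z, ‖w - w0‖ ≤ δ →
      infDist z {z' : Z | w0 ∈ F z'} ≤ κ * ‖w0 - w‖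

/-- `φ` has directional derivative `w` at `z` in direction `h`. -/
def HasDirDeriv {E : Type*} [NormedAddCommGroup E] [NormedSpace ℝ E]
    (φ : E → E) (z h w : E) : Prop :=
  Tendsto (fun t : ℝ => t⁻¹ • (φ (z + t • h) - φ z)) (𝓝[>] (0 : ℝ)) (𝓝 w)

/-- The contingent (Bouligand) tangent cone to `s` at `z`. -/
def contCone {E : Type*} [NormedAddCommGroup E] [NormedSpace ℝ E]
    (s : Set E) (z : E) : Set E :=
  {w | ∃ (t : ℕ → ℝ) (v : ℕ → E), (∀ n, 0 < t n) ∧ Tendsto t atTop (𝓝 0) ∧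
        Tendsto v atTop (𝓝 w) ∧ ∀ n, z + t n • v n ∈ s}

/-- The negative polar cone of a set. -/
def negPolar {E : Type*} [NormedAddCommGroup E] [InnerProductSpace ℝ E]
    (C : Set E) : Set E :=
  {z | ∀ d ∈ C, ⟪z, d⟫ ≤ 0}

/-- The critical cone `C_K(y,u) = T_K(y) ∩ u^⊥`. -/
def criticalCone {E : Type*} [NormedAddCommGroup E] [InnerProductSpace ℝ E]
    (K : Set E) (y u : E) : Set E :=
  contCone K y ∩ {d | ⟪u, d⟫ = 0}

/-- The (outer) second-order tangent set `T²_K(y,h)`. -/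
def secondOrderTangent {E : Type*} [NormedAddCommGroup E] [NormedSpace ℝ E]
    (K : Set E) (y h : E) : Set E :=
  {w | ∃ (t : ℕ → ℝ) (v : ℕ → E), (∀ n, 0 < t n) ∧ Tendsto t atTop (𝓝 0) ∧
        Tendsto v atTop (𝓝 w) ∧ ∀ n, y + t n • h + ((t n) ^ 2 / 2) • v n ∈ K}

variable {X Y : Type*} [NormedAddCommGroup X] [InnerProductSpace ℝ X]
  [FiniteDimensional ℝ X] [NormedAddCommGroup Y] [InnerProductSpace ℝ Y]
  [FiniteDimensional ℝ Y]

/-- The KKT solution map of the canonically perturbed problem: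
`∇f(x) + ∇g(x)*λ = a` and `λ ∈ N_K(g(x) − b)`. -/
def sKKT (f : X → ℝ) (g : X → Y) (K : Set Y) (a : X) (b : Y) : Set (X × Y) :=
  {p | gradient f p.1 + ContinuousLinearMap.adjoint (fderiv ℝ g p.1) p.2 = a ∧
       p.2 ∈ nCone K (g p.1 - b)}

/-- The multiplier set map `M(x,a,b)`. -/
def mSet (f : X → ℝ) (g : X → Y) (K : Set Y) (x : X) (a : X) (b : Y) : Set Y :=
  {l | (x, l) ∈ sKKT f g K a b}

/-- The stationary point map `X_KKT(a,b)`. -/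
def xKKT (f : X → ℝ) (g : X → Y) (K : Set Y) (a : X) (b : Y) : Set X :=
  {x | ∃ l, (x, l) ∈ sKKT f g K a b}

/-- The Hessian `∇²ₓₓL(x,λ)` of the Lagrangian `L(·,λ)` at `x`. -/
def hessLxx (f : X → ℝ) (g : X → Y) (x : X) (l : Y) : X →L[ℝ] X :=
  fderiv ℝ (fun u => gradient (fun v => f v + ⟪l, g v⟫) u) x

/-- The multiplier `l0` is noncritical: the only solutions `(ξ,v)` of
`∇²ₓₓL(x̄,λ̄)ξ + ∇g(x̄)*v = 0`, `g'(x̄)ξ − Π_K'(g(x̄)+λ̄; g'(x̄)ξ+v) = 0` have `ξ = 0`. -/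
def Noncritical (f : X → ℝ) (g : X → Y) (K : Set Y) (x0 : X) (l0 : Y) : Prop :=
  ∀ (ξ : X) (v : Y),
    hessLxx f g x0 l0 ξ + ContinuousLinearMap.adjoint (fderiv ℝ g x0) v = 0 →
    HasDirDeriv (projK K) (g x0 + l0) (fderiv ℝ g x0 ξ + v) (fderiv ℝ g x0 ξ) →
    ξ = 0

/-- Strong calmness of `S_KKT` at the origin for `(x̄,λ̄)`. -/
def StrongCalm (f : X → ℝ) (g : X → Y) (K : Set Y) (x0 : X) (l0 : Y) : Prop :=
  ∃ δ ε κ : ℝ, 0 < δ ∧ 0 < ε ∧ 0 < κ ∧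
    ∀ (a : X) (b : Y), ‖(a, b)‖ ≤ δ →
      ∀ (x : X) (l : Y), (x, l) ∈ sKKT f g K a b → ‖(x, l) - (x0, l0)‖ ≤ ε →
        ‖x - x0‖ + infDist l (mSet f g K x0 0 0) ≤ κ * ‖(a, b)‖

/-- Pseudo-isolated calmness of `X_KKT` at the origin for `x̄` (relative to `λ̄`). -/
def PseudoIsolatedCalm (f : X → ℝ) (g : X → Y) (K : Set Y) (x0 : X) (l0 : Y) : Prop :=
  ∃ ε δ κ : ℝ, 0 < ε ∧ 0 < δ ∧ 0 < κ ∧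
    ∀ (a : X) (b : Y), ‖(a, b)‖ ≤ δ →
      ∀ (x : X) (l : Y), (x, l) ∈ sKKT f g K a b → ‖(x, l) - (x0, l0)‖ ≤ ε →
        ‖x - x0‖ ≤ κ * ‖(a, b)‖

/-! Pseudo-isolated calmness controls `x` only for multipliers near `λ̄`, so it suffices that
the multipliers of KKT points near `(x̄, 0, 0)` stay near `λ̄`. Along a sequence of such KKT
pairs `(xₙ, λₙ)`, rescale by `cₙ = (1 + ‖λₙ‖)⁻¹` and pass to a limit `(c, L)` of `(cₙ, cₙ λₙ)`:
then `c ∇f(x̄) + ∇g(x̄)* L = 0`, `L ∈ N_K(g(x̄))` and `‖L‖ = 1 - c`. If `c = 0`, `L` is a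
nonzero multiplier of the constraints alone, which Robinson's CQ rules out; otherwise
`λₙ → L / c ∈ M(x̄, 0, 0) = {λ̄}`. -/

def RobinsonCQ {E F : Type*} [NormedAddCommGroup E] [NormedSpace ℝ E] [NormedAddCommGroup F]
    [NormedSpace ℝ F] (g : E → F) (K : Set F) (x0 : E) : Prop :=
  (0 : F) ∈ interior {y : F | ∃ d : E, ∃ k ∈ K, y = g x0 + fderiv ℝ g x0 d - k}

section NormalCone

variable {E : Type*} [NormedAddCommGroup E] [InnerProductSpace ℝ E] {K : Set E}

lemma smul_mem_nCone {z u : E} {c : ℝ} (hc : 0 ≤ c) (hu : u ∈ nCone K z) :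
    c • u ∈ nCone K z :=
  ⟨hu.1, fun y hy => by
    rw [real_inner_smul_left]; exact mul_nonpos_of_nonneg_of_nonpos hc (hu.2 y hy)⟩

lemma mem_nCone_of_tendsto (hK : IsClosed K) {ι : Type*} {l : Filter ι} [l.NeBot]
    {z u : ι → E} {z0 u0 : E} (hz : Tendsto z l (𝓝 z0)) (hu : Tendsto u l (𝓝 u0))
    (h : ∀ i, u i ∈ nCone K (z i)) : u0 ∈ nCone K z0 :=
  ⟨hK.mem_of_tendsto hz (Eventually.of_forall fun i => (h i).1), fun y hy =>
    le_of_tendsto (hu.inner (tendsto_const_nhds.sub hz))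
      (Eventually.of_forall fun i => (h i).2 y hy)⟩

end NormalCone

lemma RobinsonCQ.eq_zero_of_mem_nCone {E F : Type*} [NormedAddCommGroup E]
    [InnerProductSpace ℝ E] [CompleteSpace E] [NormedAddCommGroup F] [InnerProductSpace ℝ F]
    [CompleteSpace F] {g : E → F} {K : Set F} {x0 : E} (hRob : RobinsonCQ g K x0) {L : F}
    (hL : L ∈ nCone K (g x0)) (hadj : ContinuousLinearMap.adjoint (fderiv ℝ g x0) L = 0) :
    L = 0 := by
  -- `⟪L, ·⟫` is nonnegative on the Robinson set, which contains `-t • L` for small `t > 0`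
  have hnonneg : ∀ d, ∀ k ∈ K, 0 ≤ ⟪L, g x0 + fderiv ℝ g x0 d - k⟫ := fun d k hk => by
    have hd : ⟪L, fderiv ℝ g x0 d⟫ = 0 := by
      rw [← ContinuousLinearMap.adjoint_inner_left, hadj, inner_zero_left]
    have hk' := hL.2 k hk
    rw [show g x0 + fderiv ℝ g x0 d - k = fderiv ℝ g x0 d - (k - g x0) by abel,
      inner_sub_right]
    linarith
  have hsmall : ∀ᶠ t in 𝓝[>] (0 : ℝ), -(t • L) ∈
      {y : F | ∃ d : E, ∃ k ∈ K, y = g x0 + fderiv ℝ g x0 d - k} := by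
    have : Tendsto (fun t : ℝ => -(t • L)) (𝓝 0) (𝓝 0) :=
      (by fun_prop : Continuous fun t : ℝ => -(t • L)).tendsto' 0 0 (by simp)
    exact nhdsWithin_le_nhds (this (mem_interior_iff_mem_nhds.1 hRob))
  obtain ⟨t, ⟨d, k, hk, hy⟩, ht⟩ := (hsmall.and self_mem_nhdsWithin).exists
  have h := hnonneg d k hk
  rw [← hy, inner_neg_right, real_inner_smul_right, real_inner_self_eq_norm_sq] at h
  have : ‖L‖ ^ 2 ≤ 0 := by nlinarith [ht]
  simpa using this

lemma ContDiff.continuous_gradient {F : Type*} [NormedAddCommGroup F] [InnerProductSpace ℝ F]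
    [CompleteSpace F] {f : F → ℝ} (hf : ContDiff ℝ 1 f) : Continuous (gradient f) :=
  (InnerProductSpace.toDual ℝ F).symm.continuous.comp (hf.continuous_fderiv one_ne_zero)

section KKT

variable {f : X → ℝ} {g : X → Y} {K : Set Y} {x0 : X} {l0 : Y}

lemma scaled_kkt_of_tendsto (hf : ContDiff ℝ 1 f) (hg : ContDiff ℝ 1 g) (hK : IsClosed K)
    {ι : Type*} {l : Filter ι} [l.NeBot] {a : ι → X} {b : ι → Y} {x : ι → X} {μ : ι → Y}
    {c : ι → ℝ} {c0 : ℝ} {L : Y} (ha : Tendsto a l (𝓝 0)) (hb : Tendsto b l (𝓝 0))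
    (hx : Tendsto x l (𝓝 x0)) (hc : Tendsto c l (𝓝 c0)) (hcμ : Tendsto (fun i => c i • μ i) l (𝓝 L))
    (hc_nonneg : ∀ i, 0 ≤ c i) (hkkt : ∀ i, (x i, μ i) ∈ sKKT f g K (a i) (b i)) :
    c0 • gradient f x0 + ContinuousLinearMap.adjoint (fderiv ℝ g x0) L = 0 ∧
      L ∈ nCone K (g x0) := by
  constructor
  · have hadj : Tendsto (fun i => ContinuousLinearMap.adjoint (fderiv ℝ g (x i))) l
        (𝓝 (ContinuousLinearMap.adjoint (fderiv ℝ g x0))) :=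
      ((ContinuousLinearMap.adjoint.continuous.comp
        (hg.continuous_fderiv one_ne_zero)).tendsto x0).comp hx
    have hlim := (hc.smul ((hf.continuous_gradient.tendsto x0).comp hx)).add
      ((isBoundedBilinearMap_apply.continuous.tendsto _).comp (hadj.prodMk_nhds hcμ))
    have hscaled : ∀ i, c i • gradient f (x i)
        + ContinuousLinearMap.adjoint (fderiv ℝ g (x i)) (c i • μ i) = c i • a i := fun i => by
      rw [map_smul, ← smul_add, (hkkt i).1]
    simp only [Function.comp_def, hscaled] at hlim
    exact tendsto_nhds_unique hlim (by simpa using hc.smul ha)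
  · have hz : Tendsto (fun i => g (x i) - b i) l (𝓝 (g x0)) := by
      simpa using ((hg.continuous.tendsto x0).comp hx).sub hb
    exact mem_nCone_of_tendsto hK hz hcμ fun i => smul_mem_nCone (hc_nonneg i) (hkkt i).2

lemma tendsto_multiplier_of_robinsonCQ (hf : ContDiff ℝ 1 f) (hg : ContDiff ℝ 1 g)
    (hK : IsClosed K) (hRob : RobinsonCQ g K x0) (hM : mSet f g K x0 0 0 = {l0})
    {a : ℕ → X} {b : ℕ → Y} {x : ℕ → X} {μ : ℕ → Y} (ha : Tendsto a atTop (𝓝 0))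
    (hb : Tendsto b atTop (𝓝 0)) (hx : Tendsto x atTop (𝓝 x0))
    (hkkt : ∀ n, (x n, μ n) ∈ sKKT f g K (a n) (b n)) : Tendsto μ atTop (𝓝 l0) := by
  refine tendsto_of_subseq_tendsto fun ns hns => ?_
  set c : ℕ → ℝ := fun n => (1 + ‖μ (ns n)‖)⁻¹ with hc_def
  have hc_pos : ∀ n, 0 < c n := fun n => by positivity
  have hc_norm : ∀ n, ‖c n • μ (ns n)‖ = 1 - c n := fun n => by
    rw [norm_smul, Real.norm_of_nonneg (hc_pos n).le, hc_def]
    field_simp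
    ring
  have hmem : ∀ n, (c n, c n • μ (ns n)) ∈ Icc (0 : ℝ) 1 ×ˢ closedBall (0 : Y) 1 := fun n =>
    ⟨⟨(hc_pos n).le, by linarith [norm_nonneg (c n • μ (ns n)), hc_norm n]⟩,
      by rw [mem_closedBall_zero_iff, hc_norm n]; linarith [hc_pos n]⟩
  obtain ⟨⟨c0, L⟩, -, φ, hφ, hlim⟩ :=
    (isCompact_Icc.prod (isCompact_closedBall (0 : Y) 1)).tendsto_subseq hmem
  have hc : Tendsto (fun n => c (φ n)) atTop (𝓝 c0) := (continuous_fst.tendsto _).comp hlim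
  have hcμ : Tendsto (fun n => c (φ n) • μ (ns (φ n))) atTop (𝓝 L) :=
    (continuous_snd.tendsto _).comp hlim
  have hsub := hns.comp hφ.tendsto_atTop
  obtain ⟨hstat, hcone⟩ := scaled_kkt_of_tendsto hf hg hK (ha.comp hsub) (hb.comp hsub)
    (hx.comp hsub) hc hcμ (fun n => (hc_pos _).le) (fun n => hkkt _)
  have hL : ‖L‖ = 1 - c0 :=
    tendsto_nhds_unique hcμ.norm (by simpa only [hc_norm] using tendsto_const_nhds.sub hc)
  have hc0 : c0 ≠ 0 := by
    rintro rfl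
    have : L = 0 := hRob.eq_zero_of_mem_nCone hcone (by simpa using hstat)
    simp [this] at hL
  have hl0 : c0⁻¹ • L = l0 := by
    rw [← mem_singleton_iff, ← hM]
    have hc0_nonneg : 0 ≤ c0 := ge_of_tendsto' hc fun n => (hc_pos _).le
    refine ⟨?_, by simpa using smul_mem_nCone (inv_nonneg.2 hc0_nonneg) hcone⟩
    calc gradient f x0 + ContinuousLinearMap.adjoint (fderiv ℝ g x0) (c0⁻¹ • L)
        = c0⁻¹ • (c0 • gradient f x0 + ContinuousLinearMap.adjoint (fderiv ℝ g x0) L) := by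
          rw [smul_add, smul_smul, inv_mul_cancel₀ hc0, one_smul, map_smul]
      _ = 0 := by rw [hstat, smul_zero]
  refine ⟨φ, ?_⟩
  rw [← hl0]
  refine ((hc.inv₀ hc0).smul hcμ).congr fun n => ?_
  rw [smul_smul, inv_mul_cancel₀ (hc_pos _).ne', one_smul]

lemma exists_forall_norm_multiplier_sub_le (hf : ContDiff ℝ 1 f) (hg : ContDiff ℝ 1 g)
    (hK : IsClosed K) (hRob : RobinsonCQ g K x0) (hM : mSet f g K x0 0 0 = {l0}) {ε : ℝ}
    (hε : 0 < ε) :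
    ∃ δ > 0, ∀ (a : X) (b : Y) (x : X) (l : Y), ‖(a, b)‖ ≤ δ → ‖x - x0‖ ≤ δ →
      (x, l) ∈ sKKT f g K a b → ‖l - l0‖ ≤ ε := by
  by_contra! hcon
  choose a b x l hab hx hkkt hl using fun n : ℕ => hcon (1 / ((n : ℝ) + 1)) (by positivity)
  have hδ : Tendsto (fun n : ℕ => 1 / ((n : ℝ) + 1)) atTop (𝓝 0) :=
    tendsto_one_div_add_atTop_nhds_zero_nat
  have hab' : Tendsto (fun n => (a n, b n)) atTop (𝓝 0) := squeeze_zero_norm hab hδ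
  have hlim := tendsto_multiplier_of_robinsonCQ hf hg hK hRob hM
    (by simpa using hab'.fst_nhds) (by simpa using hab'.snd_nhds)
    (tendsto_iff_norm_sub_tendsto_zero.2 (squeeze_zero (fun _ => norm_nonneg _) hx hδ)) hkkt
  obtain ⟨n, hn⟩ := (hlim.eventually (closedBall_mem_nhds l0 hε)).exists
  exact (hl n).not_ge (mem_closedBall_iff_norm.1 hn)

end KKT

theorem stmt_15_general (f : X → ℝ) (g : X → Y) (K : Set Y)
    (hf : ContDiff ℝ 2 f) (hg : ContDiff ℝ 2 g)
    (hKcl : IsClosed K)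
    (x0 : X) (l0 : Y)
    (hRob : (0 : Y) ∈ interior {y : Y | ∃ d : X, ∃ k ∈ K, y = g x0 + fderiv ℝ g x0 d - k})
    (hM : mSet f g K x0 0 0 = {l0})
    (hpic : PseudoIsolatedCalm f g K x0 l0) :
    IsolatedCalm (fun q : X × Y => xKKT f g K q.1 q.2) ((0 : X), (0 : Y)) x0 := by
  obtain ⟨ε, δ, κ, hε, hδ, hκ, hpi⟩ := hpic
  obtain ⟨δ', hδ', hmult⟩ := exists_forall_norm_multiplier_sub_le (hf.of_le (by norm_num))
    (hg.of_le (by norm_num)) hKcl hRob hM hε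
  refine ⟨κ, min δ δ', min ε δ', hκ, lt_min hδ hδ', lt_min hε hδ', ?_⟩
  rintro ⟨a, b⟩ hab x ⟨l, hkkt⟩ hx
  rw [Prod.mk_sub_mk, sub_zero, sub_zero] at hab ⊢
  have hl := hmult a b x l (hab.trans (min_le_right _ _)) (hx.trans (min_le_right _ _)) hkkt
  exact hpi a b (hab.trans (min_le_left _ _)) x l hkkt
    (norm_prod_le_iff.2 ⟨hx.trans (min_le_left _ _), hl⟩)

/-- Appendix, Proposition A.1, second part: if Robinson's CQ holds
at `x̄`, i.e. `0 ∈ int(g(x̄) + g'(x̄)X − K)`, and `M(x̄,0,0) = {λ̄}`, then the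
pseudo-isolated calmness of `X_KKT` at the origin for `x̄` (relative to `λ̄`) implies
the isolated calmness of `X_KKT` at the origin for `x̄`. -/
theorem stmt_15 (f : X → ℝ) (g : X → Y) (K : Set Y)
    (hf : ContDiff ℝ 2 f) (hg : ContDiff ℝ 2 g)
    (hKne : K.Nonempty) (hKcl : IsClosed K) (hKcv : Convex ℝ K)
    (hKred : C2ConeReducible K)
    (x0 : X) (l0 : Y) (hKKT : (x0, l0) ∈ sKKT f g K 0 0)
    (hRob : (0 : Y) ∈ interior {y : Y | ∃ d : X, ∃ k ∈ K, y = g x0 + fderiv ℝ g x0 d - k})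
    (hM : mSet f g K x0 0 0 = {l0})
    (hpic : PseudoIsolatedCalm f g K x0 l0) :
    IsolatedCalm (fun q : X × Y => xKKT f g K q.1 q.2) ((0 : X), (0 : Y)) x0 :=
  stmt_15_general f g K hf hg hKcl x0 l0 hRob hM hpic

end
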